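/- For P(X,Y) = Y − φ₅(X) where φ₅(X) = 1 + X + X² + X³ + X⁴ is the fifth cyclotomic polynomial, the function V(x,y) = D(x) − (1/5) D(x⁵) on C = {(x, φ₅(x)) : x ∈ ℂ*, φ₅(x) ≠ 0} satisfies dV = η|_C. Hence P is exact. -/

import Mathlib

/-!
For holomorphic `g`, the chain rule gives
`d(D ∘ g) = log|g| · Im(−g'/(1−g) du) − log|1−g| · Im(g'/g du)`.
Taking `g = x` and `g = x⁵` and using `1 − x⁵ = (1 − x) φ₅(x)`, the `log|1−x|` terms cancel and
what remains is `η|_C = log|φ₅(x)| d arg x − log|x| d arg φ₅(x)`.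

The point `x = 1` lies on `C`, but `D(x⁵)` is singular there. On `C` one therefore uses
`V = −∑_{k=1}^{4} D(ζᵏ x)` with `ζ` a primitive fifth root of unity (equal to `D(x) − D(x⁵)/5` by
the distribution relation). Its differential is `η|_C` because `φ₅(x) = ∏ (1 − ζᵏ x)`, whose
logarithmic derivative is `∑ −ζᵏ/(1 − ζᵏ x)`.
-/

/-- `η = log|y| d(arg x) − log|x| d(arg y)` as a continuous `ℝ`-linear functional. -/
noncomputable def etaL (p : ℂ × ℂ) : (ℂ × ℂ) →L[ℝ] ℝ :=
  Real.log (‖p.2‖) •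
      (Complex.imCLM.comp ((p.1⁻¹ • ContinuousLinearMap.fst ℂ ℂ ℂ).restrictScalars ℝ)) -
    Real.log (‖p.1‖) •
      (Complex.imCLM.comp ((p.2⁻¹ • ContinuousLinearMap.snd ℂ ℂ ℂ).restrictScalars ℝ))

/-- The differential of the Bloch–Wigner dilogarithm:
`dD(z)(w) = log|z|·Im(−w/(1−z)) − log|1−z|·Im(w/z)`. -/
noncomputable def dBW (z : ℂ) : ℂ →L[ℝ] ℝ :=
  Real.log ‖z‖ •
      (Complex.imCLM.comp (((-(1 - z)⁻¹) • ContinuousLinearMap.id ℂ ℂ).restrictScalars ℝ)) -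
    Real.log ‖1 - z‖ •
      (Complex.imCLM.comp ((z⁻¹ • ContinuousLinearMap.id ℂ ℂ).restrictScalars ℝ))

noncomputable def imMul : ℂ →ₗ[ℝ] ℂ →L[ℝ] ℝ where
  toFun a := Complex.imCLM.comp ((a • ContinuousLinearMap.id ℂ ℂ).restrictScalars ℝ)
  map_add' a b := by ext; simp [add_mul]
  map_smul' r a := by ext; simp [mul_assoc]

@[simp]
theorem imMul_apply (a u : ℂ) : imMul a u = (a * u).im := rfl

theorem dBW_eq_imMul (z : ℂ) :
    dBW z = Real.log ‖z‖ • imMul (-(1 - z)⁻¹) - Real.log ‖1 - z‖ • imMul z⁻¹ := rfl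

theorem imMul_comp_smul (a c : ℂ) :
    (imMul a).comp ((c • ContinuousLinearMap.id ℂ ℂ).restrictScalars ℝ) = imMul (a * c) := by
  ext u; simp [mul_assoc]

theorem etaL_comp_graphTangent (x y c : ℂ) :
    (etaL (x, y)).comp (((ContinuousLinearMap.id ℂ ℂ).prod
        (c • ContinuousLinearMap.id ℂ ℂ)).restrictScalars ℝ) =
      Real.log ‖y‖ • imMul x⁻¹ - Real.log ‖x‖ • imMul (c / y) := by
  ext u
  all_goals simp [etaL, div_eq_inv_mul, mul_assoc, mul_left_comm]

theorem HasDerivAt.hasFDerivAt_restrictScalars_smul {g : ℂ → ℂ} {g' x : ℂ}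
    (hg : HasDerivAt g g' x) :
    HasFDerivAt g ((g' • ContinuousLinearMap.id ℂ ℂ).restrictScalars ℝ) x :=
  (hg.hasFDerivAt.congr_fderiv (by ext; simp)).restrictScalars ℝ

theorem hasFDerivAt_comp_of_dBW {D : ℂ → ℝ} {g : ℂ → ℂ} {g' x : ℂ}
    (hD : HasFDerivAt D (dBW (g x)) (g x)) (hg : HasDerivAt g g' x) :
    HasFDerivAt (fun w => D (g w))
      (Real.log ‖g x‖ • imMul (-g' / (1 - g x)) - Real.log ‖1 - g x‖ • imMul (g' / g x)) x := by
  refine (hD.comp x hg.hasFDerivAt_restrictScalars_smul).congr_fderiv ?_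
  rw [dBW_eq_imMul, ContinuousLinearMap.sub_comp, ContinuousLinearMap.smul_comp,
    ContinuousLinearMap.smul_comp, imMul_comp_smul, imMul_comp_smul]
  simp only [div_eq_inv_mul, mul_neg, neg_mul]

theorem hasFDerivWithinAt_comp_fst_of_subset_graph {𝕜 E F G : Type*} [NontriviallyNormedField 𝕜]
    [NormedAddCommGroup E] [NormedSpace 𝕜 E] [NormedAddCommGroup F] [NormedSpace 𝕜 F]
    [NormedAddCommGroup G] [NormedSpace 𝕜 G] {f : E → G} {p : E → F} {p' : E →L[𝕜] F}
    {L : E × F →L[𝕜] G} {x : E} {s : Set (E × F)}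
    (hf : HasFDerivAt f (L.comp ((ContinuousLinearMap.id 𝕜 E).prod p')) x)
    (hp : HasFDerivAt p p' x) (hs : s ⊆ {w | w.2 = p w.1}) :
    HasFDerivWithinAt (fun w => f w.1) L s (x, p x) := by
  -- adding a term that vanishes on the graph corrects the derivative in the normal direction
  have hnormal : HasFDerivAt (fun w : E × F => f w.1 + (L.comp (.inr 𝕜 E F)) (w.2 - p w.1))
      L (x, p x) := by
    have hfst : HasFDerivAt (fun w : E × F => p w.1) (p'.comp (.fst 𝕜 E F)) (x, p x) :=
      hp.comp (x, p x) hasFDerivAt_fst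
    refine ((hf.comp (x, p x) hasFDerivAt_fst).add
      ((L.comp (.inr 𝕜 E F)).hasFDerivAt.comp (x, p x) (hasFDerivAt_snd.sub hfst))).congr_fderiv ?_
    ext u <;> simp [Prod.mk_zero_zero, ← map_neg, ← map_add, -map_sub]
  refine hnormal.hasFDerivWithinAt.congr (fun w hw => ?_) (by simp [Prod.mk_zero_zero])
  simp [show w.2 = p w.1 from hs hw, Prod.mk_zero_zero]

def phi5 (x : ℂ) : ℂ := 1 + x + x ^ 2 + x ^ 3 + x ^ 4

def phi5' (x : ℂ) : ℂ := 1 + 2 * x + 3 * x ^ 2 + 4 * x ^ 3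

theorem hasDerivAt_phi5 (x : ℂ) : HasDerivAt phi5 (phi5' x) x := by
  refine (((((hasDerivAt_id' x).const_add 1).fun_add (hasDerivAt_pow 2 x)).fun_add
    (hasDerivAt_pow 3 x)).fun_add (hasDerivAt_pow 4 x)).congr_deriv ?_
  norm_num [phi5']

theorem one_sub_pow_five (x : ℂ) : 1 - x ^ 5 = (1 - x) * phi5 x := by
  simp only [phi5]; ring

theorem hasFDerivAt_sub_one_fifth_comp_pow_five {D : ℂ → ℝ}
    (hD : ∀ z : ℂ, z ≠ 0 → z ≠ 1 → HasFDerivAt D (dBW z) z) {x : ℂ} (hx0 : x ≠ 0) (hx1 : x ≠ 1)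
    (hφ : phi5 x ≠ 0) :
    HasFDerivAt (fun w => D w - (1 / 5) * D (w ^ 5))
      (Real.log ‖phi5 x‖ • imMul x⁻¹ - Real.log ‖x‖ • imMul (phi5' x / phi5 x)) x := by
  have h1x : 1 - x ≠ 0 := sub_ne_zero.2 hx1.symm
  have h15 : 1 - x ^ 5 ≠ 0 := by rw [one_sub_pow_five]; exact mul_ne_zero h1x hφ
  have hid := hasFDerivAt_comp_of_dBW (hD x hx0 hx1) (hasDerivAt_id' x)
  have hx5 : x ^ 5 ≠ 1 := fun h => h15 (by rw [h, sub_self])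
  have hpow := hasFDerivAt_comp_of_dBW (g := fun w => w ^ 5) (hD _ (pow_ne_zero 5 hx0) hx5)
    (hasDerivAt_pow 5 x)
  refine (hid.sub (hpow.const_mul (1 / 5))).congr_fderiv ?_
  rw [norm_pow, Real.log_pow, one_sub_pow_five, norm_mul,
    Real.log_mul (norm_ne_zero_iff.2 h1x) (norm_ne_zero_iff.2 hφ)]
  simp only [smul_sub, smul_smul, ← map_smul, ← map_sub]
  congr 1
  simp only [Complex.real_smul, phi5']
  push_cast
  field_simp
  simp only [phi5]
  ring

theorem IsPrimitiveRoot.phi5_eq_prod {ζ : ℂ} (hζ : IsPrimitiveRoot ζ 5) :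
    phi5 = fun x => ∏ k ∈ Finset.range 4, (1 - ζ ^ (k + 1) * x) := by
  have hsum : 1 + ζ + ζ ^ 2 + ζ ^ 3 + ζ ^ 4 = 0 := by
    simpa [Finset.sum_range_succ] using hζ.geom_sum_eq_zero (by norm_num)
  funext x
  simp only [phi5, Finset.prod_range_succ, Finset.prod_range_zero]
  linear_combination -(-x - x^2 + x^2*ζ + x^2*ζ^3 - x^3 + x^3*ζ - x^3*ζ^5 - x^4 + x^4*ζ - x^4*ζ^5
    + x^4*ζ^6) * hsum

theorem IsPrimitiveRoot.sum_neg_div_one_sub_mul {ζ x : ℂ} (hζ : IsPrimitiveRoot ζ 5)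
    (hφ : phi5 x ≠ 0) :
    ∑ k ∈ Finset.range 4, -ζ ^ (k + 1) / (1 - ζ ^ (k + 1) * x) = phi5' x / phi5 x := by
  have hfac : ∀ k ∈ Finset.range 4, 1 - ζ ^ (k + 1) * x ≠ 0 := by
    rw [hζ.phi5_eq_prod] at hφ
    exact Finset.prod_ne_zero_iff.1 hφ
  have hlin (k : ℕ) : HasDerivAt (fun w => 1 - ζ ^ (k + 1) * w) (-ζ ^ (k + 1)) x := by
    simpa using ((hasDerivAt_id' x).const_mul (ζ ^ (k + 1))).const_sub 1
  calc ∑ k ∈ Finset.range 4, -ζ ^ (k + 1) / (1 - ζ ^ (k + 1) * x)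
      = ∑ k ∈ Finset.range 4, logDeriv (fun w => 1 - ζ ^ (k + 1) * w) x := by
        simp only [logDeriv_apply, (hlin _).deriv]
    _ = logDeriv phi5 x := by
        rw [hζ.phi5_eq_prod, logDeriv_prod hfac fun k _ => (hlin k).differentiableAt]
    _ = phi5' x / phi5 x := by rw [logDeriv_apply, (hasDerivAt_phi5 x).deriv]

theorem hasFDerivAt_neg_sum_comp_rootOfUnity_mul {D : ℂ → ℝ}
    (hD : ∀ z : ℂ, z ≠ 0 → z ≠ 1 → HasFDerivAt D (dBW z) z) {ζ x : ℂ}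
    (hζ : IsPrimitiveRoot ζ 5) (hx : x ≠ 0) (hφ : phi5 x ≠ 0) :
    HasFDerivAt (fun w => -∑ k ∈ Finset.range 4, D (ζ ^ (k + 1) * w))
      (Real.log ‖phi5 x‖ • imMul x⁻¹ - Real.log ‖x‖ • imMul (phi5' x / phi5 x)) x := by
  have hfac : ∀ k ∈ Finset.range 4, 1 - ζ ^ (k + 1) * x ≠ 0 := by
    rw [hζ.phi5_eq_prod] at hφ
    exact Finset.prod_ne_zero_iff.1 hφ
  have hζk (k : ℕ) : ζ ^ (k + 1) ≠ 0 := pow_ne_zero _ (hζ.ne_zero (by norm_num))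
  have hterm : ∀ k ∈ Finset.range 4, HasFDerivAt (fun w => D (ζ ^ (k + 1) * w))
      (Real.log ‖x‖ • imMul (-ζ ^ (k + 1) / (1 - ζ ^ (k + 1) * x))
        - Real.log ‖1 - ζ ^ (k + 1) * x‖ • imMul x⁻¹) x := by
    intro k hk
    have h1 : ζ ^ (k + 1) * x ≠ 1 := fun h => hfac k hk (by rw [h, sub_self])
    have := hasFDerivAt_comp_of_dBW (g := fun w => ζ ^ (k + 1) * w)
      (hD _ (mul_ne_zero (hζk k) hx) h1) ((hasDerivAt_id' x).const_mul (ζ ^ (k + 1)))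
    rwa [mul_one, norm_mul, norm_pow, hζ.norm'_eq_one (by norm_num), one_pow, one_mul,
      div_mul_cancel_left₀ (hζk k)] at this
  refine (HasFDerivAt.fun_sum hterm).neg.congr_fderiv ?_
  have hlog : ∑ k ∈ Finset.range 4, Real.log ‖1 - ζ ^ (k + 1) * x‖ = Real.log ‖phi5 x‖ := by
    rw [← Real.log_prod fun k hk => norm_ne_zero_iff.2 (hfac k hk), ← norm_prod, hζ.phi5_eq_prod]
  rw [Finset.sum_sub_distrib, ← Finset.smul_sum, ← map_sum, ← Finset.sum_smul, hlog,
    hζ.sum_neg_div_one_sub_mul hφ, neg_sub]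

/-- For `P = Y − φ₅(X)` with `φ₅(X) = 1 + X + X² + X³ + X⁴`: the function
`V(x,y) = D(x) − (1/5)D(x⁵)` satisfies `dV = η|_C` on the curve `y = φ₅(x)`,
where the tangent map of the parametrization `x ↦ (x, φ₅(x))` is `u ↦ (u, φ₅'(x)·u)`.
Hence `P` is exact. -/
theorem cyclotomic_curve_exact
    (D : ℂ → ℝ) (hD : ∀ z : ℂ, z ≠ 0 → z ≠ 1 → HasFDerivAt D (dBW z) z) :
    (∀ x : ℂ, x ≠ 0 → x ≠ 1 → 1 + x + x ^ 2 + x ^ 3 + x ^ 4 ≠ 0 →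
      HasFDerivAt (fun w : ℂ => D w - (1 / 5) * D (w ^ 5))
        ((etaL (x, 1 + x + x ^ 2 + x ^ 3 + x ^ 4)).comp
          (((ContinuousLinearMap.id ℂ ℂ).prod
              ((1 + 2 * x + 3 * x ^ 2 + 4 * x ^ 3) • ContinuousLinearMap.id ℂ ℂ)).restrictScalars ℝ)) x) ∧
    (∃ V : ℂ × ℂ → ℝ,
      ∀ z ∈ {w : ℂ × ℂ | w.1 ≠ 0 ∧ w.2 ≠ 0 ∧ w.2 = 1 + w.1 + w.1 ^ 2 + w.1 ^ 3 + w.1 ^ 4},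
        HasFDerivWithinAt V (etaL z)
          {w : ℂ × ℂ | w.1 ≠ 0 ∧ w.2 ≠ 0 ∧ w.2 = 1 + w.1 + w.1 ^ 2 + w.1 ^ 3 + w.1 ^ 4} z) := by
  refine ⟨fun x hx0 hx1 hφ => ?_, ?_⟩
  · rw [etaL_comp_graphTangent]
    exact hasFDerivAt_sub_one_fifth_comp_pow_five hD hx0 hx1 hφ
  · obtain ⟨ζ, hζ⟩ : ∃ ζ : ℂ, IsPrimitiveRoot ζ 5 :=
      ⟨_, Complex.isPrimitiveRoot_exp 5 (by norm_num)⟩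
    refine ⟨fun w => -∑ k ∈ Finset.range 4, D (ζ ^ (k + 1) * w.1), ?_⟩
    rintro ⟨x, y⟩ ⟨hx0, hy0, hy : y = phi5 x⟩
    subst hy
    have hV := hasFDerivAt_neg_sum_comp_rootOfUnity_mul hD hζ hx0 hy0
    rw [← etaL_comp_graphTangent] at hV
    refine hasFDerivWithinAt_comp_fst_of_subset_graph hV
      (hasDerivAt_phi5 x).hasFDerivAt_restrictScalars_smul fun _ hw => ?_
    exact hw.2.2
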